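/- arXiv:2212.14345 — 3 statements merged into one kernel-verified Lean document; each statement's English description precedes it below -/
import Mathlib

section
/- The total k-means cost of the spectral embedding with respect to the approximate centres is bounded by the spectral gap: Σ_{i=1}^k Σ_{u∈S_i} deg(u)·‖F(u) − p^(i)‖² ≤ k/Υ(k). -/
open Finset
open scoped RealInnerProductSpace

/-- The volume of a vertex set: the sum of the degrees of its vertices. -/
noncomputable def gVol {V : Type*} (deg : V → ℝ) (S : Finset V) : ℝ := ∑ u ∈ S, deg u

/-- The total edge weight between two vertex sets. -/
noncomputable def gCut {V : Type*} (w : V → V → ℝ) (A B : Finset V) : ℝ :=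
  ∑ u ∈ A, ∑ v ∈ B, w u v

/-- The conductance of a vertex set. -/
noncomputable def gCond {V : Type*} [Fintype V] [DecidableEq V]
    (w : V → V → ℝ) (deg : V → ℝ) (S : Finset V) : ℝ :=
  gCut w S Sᶜ / min (gVol deg S) (gVol deg Sᶜ)

/-- `S : Fin k → Finset V` is a partition of `V` into `k` non-empty sets. -/
def IsPartition {V : Type*} [Fintype V] {k : ℕ} (S : Fin k → Finset V) : Prop :=
  (∀ i, (S i).Nonempty) ∧ (∀ i j, i ≠ j → Disjoint (S i) (S j)) ∧ ∀ v, ∃ i, v ∈ S i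

/-- The vector `D^{1/2} χ_S`. -/
noncomputable def indVec {n : ℕ} (deg : Fin n → ℝ) (S : Finset (Fin n)) :
    EuclideanSpace ℝ (Fin n) :=
  WithLp.toLp 2 (fun v => if v ∈ S then Real.sqrt (deg v) else 0)

/-- The normalised indicator vector `D^{1/2} χ_S / ‖D^{1/2} χ_S‖` of a cluster `S`. -/
noncomputable def gbarVec {n : ℕ} (deg : Fin n → ℝ) (S : Finset (Fin n)) :
    EuclideanSpace ℝ (Fin n) :=
  ‖indVec deg S‖⁻¹ • indVec deg S

/-! For `u ∈ S_i` the coordinates of `√deg(u) · (F(u) - p^(i))` are `f_j(u) - ⟨f_j, ḡ_i⟩ ḡ_i(u)`,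
the residuals of projecting `f_j` onto the span of the disjointly supported unit vectors `ḡ_i`;
summing their squares, the cost is `Σ_i (1 - Σ_{j ≤ k} ⟨f_j, ḡ_i⟩²)`. By Parseval each term is
`Σ_{j > k} ⟨f_j, ḡ_i⟩²`, and expanding `ḡ_i` in the eigenbasis of the positive semidefinite `N`,
`λ_{k+1} Σ_{j > k} ⟨f_j, ḡ_i⟩² ≤ ⟨ḡ_i, N ḡ_i⟩ = w(S_i, V ∖ S_i) / vol(S_i) ≤ Φ(S_i) ≤ ρ(k)`. -/

open Matrix

section Spectral

variable {ι E : Type*} [Fintype ι] [NormedAddCommGroup E] [InnerProductSpace ℝ E]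

theorem OrthonormalBasis.inner_map_self_eq_sum (b : OrthonormalBasis ι ℝ E) {T : E →ₗ[ℝ] E}
    {lam : ι → ℝ} (hT : ∀ j, T (b j) = lam j • b j) (x : E) :
    ⟪x, T x⟫ = ∑ j, lam j * ⟪b j, x⟫ ^ 2 := by
  nth_rw 2 [← b.sum_repr' x]
  simp only [map_sum, map_smul, hT, inner_sum, real_inner_smul_right, real_inner_comm x]
  exact sum_congr rfl fun j _ => by ring

theorem OrthonormalBasis.mul_sum_sq_inner_le_inner_map_self [LinearOrder ι]
    (b : OrthonormalBasis ι ℝ E) {T : E →ₗ[ℝ] E} (hT_nonneg : ∀ x, 0 ≤ ⟪x, T x⟫)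
    {lam : ι → ℝ} (hT : ∀ j, T (b j) = lam j • b j) (hlam : Monotone lam) (m : ι) (x : E) :
    lam m * ∑ j with m ≤ j, ⟪b j, x⟫ ^ 2 ≤ ⟪x, T x⟫ := by
  have hlam_nonneg (j : ι) : 0 ≤ lam j := by
    simpa [hT, real_inner_smul_right, b.orthonormal.1 j] using hT_nonneg (b j)
  rw [b.inner_map_self_eq_sum hT, mul_sum]
  calc ∑ j with m ≤ j, lam m * ⟪b j, x⟫ ^ 2
      ≤ ∑ j with m ≤ j, lam j * ⟪b j, x⟫ ^ 2 :=
        sum_le_sum fun j hj => by gcongr; exact hlam (mem_filter.1 hj).2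
    _ ≤ ∑ j, lam j * ⟪b j, x⟫ ^ 2 :=
        sum_le_sum_of_subset_of_nonneg (subset_univ _) fun j _ _ => by
          have := hlam_nonneg j; positivity

end Spectral

theorem Fin.sum_castLE_add_sum_filter_le {M : Type*} [AddCommMonoid M] {k n : ℕ} (h : k < n)
    (g : Fin n → M) :
    ∑ j : Fin k, g (Fin.castLE h.le j) + ∑ j with (⟨k, h⟩ : Fin n) ≤ j, g j = ∑ j, g j := by
  rw [← sum_filter_not_add_sum_filter univ (fun j : Fin n => (⟨k, h⟩ : Fin n) ≤ j)]
  congr 1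
  refine (sum_map univ (Fin.castLEEmb h.le) g).symm.trans (congrArg (Finset.sum · g) ?_)
  ext j
  simpa [Fin.le_def] using ⟨fun ⟨a, ha⟩ => ha ▸ a.isLt, fun hj => ⟨⟨j, hj⟩, rfl⟩⟩

theorem OrthonormalBasis.norm_sq_sub_sum_sq_inner_castLE_le {n k : ℕ} {E : Type*}
    [NormedAddCommGroup E] [InnerProductSpace ℝ E] (b : OrthonormalBasis (Fin n) ℝ E)
    {T : E →ₗ[ℝ] E} (hT_nonneg : ∀ x, 0 ≤ ⟪x, T x⟫) {lam : Fin n → ℝ}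
    (hT : ∀ j, T (b j) = lam j • b j) (hlam : Monotone lam) (h : k < n) (hpos : 0 < lam ⟨k, h⟩)
    (x : E) :
    ‖x‖ ^ 2 - ∑ j : Fin k, ⟪b (Fin.castLE h.le j), x⟫ ^ 2 ≤ ⟪x, T x⟫ / lam ⟨k, h⟩ := by
  rw [le_div_iff₀ hpos, ← b.sum_sq_inner_right x, ← Fin.sum_castLE_add_sum_filter_le h,
    add_sub_cancel_left, mul_comm]
  exact b.mul_sum_sq_inner_le_inner_map_self hT_nonneg hT hlam _ x

theorem gVol_pos {V : Type*} {deg : V → ℝ} (hdeg : ∀ v, 0 < deg v) {S : Finset V}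
    (hS : S.Nonempty) : 0 < gVol deg S :=
  sum_pos (fun v _ => hdeg v) hS

section NormalizedLaplacian

variable {V : Type*} [Fintype V] [DecidableEq V] {w : V → V → ℝ} {deg : V → ℝ}

theorem gCut_compl_div_gVol_le_gCond (hw : ∀ u v, 0 ≤ w u v) (hdeg : ∀ v, 0 < deg v)
    (S : Finset V) : gCut w S Sᶜ / gVol deg S ≤ gCond w deg S := by
  rcases S.eq_empty_or_nonempty with rfl | hS
  · simp [gCut, gCond]
  rcases Sᶜ.eq_empty_or_nonempty with hSc | hSc
  · simp [gCut, gCond, hSc]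
  exact div_le_div_of_nonneg_left (sum_nonneg fun u _ => sum_nonneg fun v _ => hw u v)
    (lt_min (gVol_pos hdeg hS) (gVol_pos hdeg hSc)) (min_le_left _ _)

variable (w deg) in
noncomputable def normLap : Matrix V V ℝ :=
  of fun u v => (if u = v then (1 : ℝ) else 0) - w u v / (√(deg u) * √(deg v))

theorem normLap_mulVec_dotProduct (hsymm : ∀ u v, w u v = w v u)
    (hdeg : ∀ u, deg u = ∑ v, w u v) (hdegpos : ∀ u, 0 < deg u) (x : V → ℝ) :
    normLap w deg *ᵥ x ⬝ᵥ x = 2⁻¹ * ∑ u, ∑ v, w u v * (x u / √(deg u) - x v / √(deg v)) ^ 2 := by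
  set y := fun u => x u / √(deg u)
  have hdiag (u : V) : x u * x u = ∑ v, w u v * y u ^ 2 := by
    rw [← sum_mul, ← hdeg, div_pow, Real.sq_sqrt (hdegpos u).le]
    field_simp [(hdegpos u).ne']
  have hentry (u v : V) :
      normLap w deg u v * x v * x u = (if u = v then x u * x u else 0) - w u v * (y u * y v) := by
    simp only [normLap, of_apply, y]
    split_ifs with h
    · subst h; field_simp
    · field_simp; ring
  calc normLap w deg *ᵥ x ⬝ᵥ x = ∑ u, ∑ v, normLap w deg u v * x v * x u := by
        simp [dotProduct, mulVec, sum_mul]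
    _ = ∑ u, ∑ v, w u v * y u ^ 2 - ∑ u, ∑ v, w u v * (y u * y v) := by
        simp_rw [hentry, sum_sub_distrib, sum_ite_eq, if_pos (mem_univ _), hdiag]
    _ = 2⁻¹ * ∑ u, ∑ v, w u v * (y u - y v) ^ 2 := by
        have hswap : ∑ u, ∑ v, w u v * y v ^ 2 = ∑ u, ∑ v, w u v * y u ^ 2 := by
          rw [sum_comm]; simp_rw [hsymm]
        have hexpand (u v : V) : w u v * (y u - y v) ^ 2
            = w u v * y u ^ 2 + w u v * y v ^ 2 - 2 * (w u v * (y u * y v)) := by ring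
        simp_rw [hexpand, sum_sub_distrib, sum_add_distrib, ← mul_sum, hswap]
        ring

theorem normLap_mulVec_dotProduct_nonneg (hw : ∀ u v, 0 ≤ w u v)
    (hsymm : ∀ u v, w u v = w v u) (hdeg : ∀ u, deg u = ∑ v, w u v) (hdegpos : ∀ u, 0 < deg u)
    (x : V → ℝ) : 0 ≤ normLap w deg *ᵥ x ⬝ᵥ x := by
  rw [normLap_mulVec_dotProduct hsymm hdeg hdegpos]
  have := sum_nonneg fun u (_ : u ∈ univ) => sum_nonneg fun v (_ : v ∈ univ) =>
    mul_nonneg (hw u v) (sq_nonneg (x u / √(deg u) - x v / √(deg v)))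
  positivity

theorem normLap_mulVec_dotProduct_of_indicator (hsymm : ∀ u v, w u v = w v u)
    (hdeg : ∀ u, deg u = ∑ v, w u v) (hdegpos : ∀ u, 0 < deg u) (S : Finset V) (c : ℝ)
    {x : V → ℝ} (hx : ∀ v, x v = if v ∈ S then √(deg v) / c else 0) :
    normLap w deg *ᵥ x ⬝ᵥ x = gCut w S Sᶜ / c ^ 2 := by
  have hterm (u v : V) : w u v * (x u / √(deg u) - x v / √(deg v)) ^ 2
      = (if u ∈ S then (if v ∈ Sᶜ then w u v / c ^ 2 else 0) else 0)
        + (if v ∈ S then (if u ∈ Sᶜ then w v u / c ^ 2 else 0) else 0) := by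
    have hscaled (v : V) : x v / √(deg v) = if v ∈ S then c⁻¹ else 0 := by
      rw [hx]
      split_ifs
      · field_simp [(Real.sqrt_pos.2 (hdegpos v)).ne']
      · exact zero_div _
    rw [hsymm v u, hscaled, hscaled]
    by_cases hu : u ∈ S <;> by_cases hv : v ∈ S <;> simp [hu, hv] <;> ring
  rw [normLap_mulVec_dotProduct hsymm hdeg hdegpos]
  simp_rw [hterm, sum_add_distrib, sum_ite_irrel, sum_const_zero, sum_ite_mem, univ_inter]
  rw [sum_comm (s := univ) (t := S)]
  simp_rw [sum_ite_mem, univ_inter, gCut, sum_div]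
  ring

end NormalizedLaplacian

section ClusterVectors

variable {n : ℕ} {deg : Fin n → ℝ}

theorem norm_indVec (hdeg : ∀ v, 0 ≤ deg v) (S : Finset (Fin n)) :
    ‖indVec deg S‖ = √(gVol deg S) := by
  rw [EuclideanSpace.norm_eq, gVol,
    ← sum_subset (subset_univ S) fun v _ hv => by simp [indVec, hv]]
  congr 1
  refine sum_congr rfl fun v hv => ?_
  simp [indVec, hv, Real.sq_sqrt (hdeg v)]

theorem gbarVec_apply (hdeg : ∀ v, 0 ≤ deg v) (S : Finset (Fin n)) (v : Fin n) :
    gbarVec deg S v = if v ∈ S then √(deg v) / √(gVol deg S) else 0 := by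
  rw [gbarVec, norm_indVec hdeg]
  simp only [PiLp.smul_apply, indVec, smul_eq_mul]
  split_ifs <;> simp [div_eq_inv_mul]

theorem gbarVec_apply_of_notMem {S : Finset (Fin n)} {v : Fin n} (hv : v ∉ S) :
    gbarVec deg S v = 0 := by
  simp [gbarVec, indVec, hv]

theorem norm_gbarVec (hdeg : ∀ v, 0 < deg v) {S : Finset (Fin n)} (hS : S.Nonempty) :
    ‖gbarVec deg S‖ = 1 := by
  refine norm_smul_inv_norm fun h => ?_
  have := norm_indVec (fun v => (hdeg v).le) S
  rw [h, norm_zero, eq_comm, Real.sqrt_eq_zero'] at this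
  exact (gVol_pos hdeg hS).not_ge this

theorem deg_mul_norm_sub_sq_eq {J : Type*} [Fintype J] (hdeg : ∀ v, 0 < deg v)
    {S : Finset (Fin n)} {u : Fin n} (hu : u ∈ S) (a : J → EuclideanSpace ℝ (Fin n))
    {y z : EuclideanSpace ℝ J} (hy : ∀ j, y j = a j u / √(deg u))
    (hz : ∀ j, z j = ⟪a j, gbarVec deg S⟫ / √(gVol deg S)) :
    deg u * ‖y - z‖ ^ 2 = ∑ j, (a j u - ⟪a j, gbarVec deg S⟫ * gbarVec deg S u) ^ 2 := by
  rw [EuclideanSpace.norm_sq_eq, mul_sum]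
  refine sum_congr rfl fun j _ => ?_
  rw [Real.norm_eq_abs, sq_abs, PiLp.sub_apply, hy, hz,
    gbarVec_apply (fun v => (hdeg v).le), if_pos hu]
  have hsqrt := Real.sqrt_pos.2 (hdeg u)
  field_simp
  rw [Real.sq_sqrt (hdeg u).le]

theorem one_sub_sum_sq_inner_gbarVec_le {k : ℕ} {w : Fin n → Fin n → ℝ}
    (hw : ∀ u v, 0 ≤ w u v) (hsymm : ∀ u v, w u v = w v u) (hdeg : ∀ u, deg u = ∑ v, w u v)
    (hdegpos : ∀ u, 0 < deg u) {f : Fin n → EuclideanSpace ℝ (Fin n)} (hf : Orthonormal ℝ f)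
    {lam : Fin n → ℝ} (heig : ∀ j, normLap w deg *ᵥ f j = lam j • f j) (hlam : Monotone lam)
    (hkn : k < n) (hpos : 0 < lam ⟨k, hkn⟩) {S : Finset (Fin n)} (hS : S.Nonempty) :
    1 - ∑ j : Fin k, ⟪f (Fin.castLE hkn.le j), gbarVec deg S⟫ ^ 2
      ≤ gCond w deg S / lam ⟨k, hkn⟩ := by
  let b : OrthonormalBasis (Fin n) ℝ (EuclideanSpace ℝ (Fin n)) :=
    .mk hf (hf.linearIndependent.span_eq_top_of_card_eq_finrank' (by simp)).ge
  have hb : ⇑b = f := OrthonormalBasis.coe_mk _ _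
  let T := toEuclideanLin (normLap w deg)
  have hquad (x : EuclideanSpace ℝ (Fin n)) : ⟪x, T x⟫ = normLap w deg *ᵥ x ⬝ᵥ x := by
    simp [T, EuclideanSpace.inner_eq_star_dotProduct]
  have hT (j : Fin n) : T (b j) = lam j • b j := by
    rw [hb]; exact congrArg (WithLp.toLp 2) (heig j)
  have hdefect := b.norm_sq_sub_sum_sq_inner_castLE_le
    (fun x => (hquad x).symm ▸ normLap_mulVec_dotProduct_nonneg hw hsymm hdeg hdegpos x)
    hT hlam hkn hpos (gbarVec deg S)
  rw [hb, norm_gbarVec hdegpos hS, one_pow, hquad,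
    normLap_mulVec_dotProduct_of_indicator hsymm hdeg hdegpos S _
      (gbarVec_apply (fun v => (hdegpos v).le) S),
    Real.sq_sqrt (gVol_pos hdegpos hS).le] at hdefect
  exact hdefect.trans (div_le_div_of_nonneg_right (gCut_compl_div_gVol_le_gCond hw hdegpos S)
    hpos.le)

end ClusterVectors

theorem EuclideanSpace.sum_sq_sub_inner_mul_of_support {ι : Type*} [Fintype ι]
    (x : EuclideanSpace ℝ ι) {S : Finset ι} {g : EuclideanSpace ℝ ι} (hg : ∀ v ∉ S, g v = 0)
    (hg1 : ‖g‖ = 1) :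
    ∑ u ∈ S, (x u - ⟪x, g⟫ * g u) ^ 2 = ∑ u ∈ S, x u ^ 2 - ⟪x, g⟫ ^ 2 := by
  have hinner : ⟪x, g⟫ = ∑ u ∈ S, x u * g u := by
    rw [EuclideanSpace.inner_eq_star_dotProduct, dotProduct,
      ← sum_subset (subset_univ S) fun u _ hu => by simp [hg u hu]]
    exact sum_congr rfl fun u _ => by simp [mul_comm]
  have hnorm : ∑ u ∈ S, g u ^ 2 = 1 := by
    have := EuclideanSpace.norm_sq_eq g
    rw [hg1, ← sum_subset (subset_univ S) fun u _ hu => by simp [hg u hu]] at this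
    simpa using this.symm
  have hexpand (u : ι) : (x u - ⟪x, g⟫ * g u) ^ 2
      = x u ^ 2 - 2 * ⟪x, g⟫ * (x u * g u) + ⟪x, g⟫ ^ 2 * g u ^ 2 := by ring
  simp_rw [hexpand, sum_add_distrib, sum_sub_distrib, ← mul_sum, ← hinner, hnorm]
  ring

theorem IsPartition.sum_sum_eq_sum {V M : Type*} [Fintype V] [AddCommMonoid M] {k : ℕ}
    {S : Fin k → Finset V} (hS : IsPartition S) (g : V → M) :
    ∑ i, ∑ u ∈ S i, g u = ∑ u, g u := by
  classical
  obtain ⟨-, hdisj, hcover⟩ := hS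
  rw [← sum_biUnion fun i _ j _ hij => hdisj i j hij]
  exact sum_subset (subset_univ _) fun u _ hu => absurd (by simpa using hcover u) hu

theorem IsPartition.sum_sum_sum_sq_sub_inner_mul {V J : Type*} [Fintype V] [Fintype J] {k : ℕ}
    {S : Fin k → Finset V} (hS : IsPartition S) {g : Fin k → EuclideanSpace ℝ V}
    (hg : ∀ i, ∀ v ∉ S i, g i v = 0) (hg1 : ∀ i, ‖g i‖ = 1) (x : J → EuclideanSpace ℝ V) :
    ∑ i, ∑ u ∈ S i, ∑ j, (x j u - ⟪x j, g i⟫ * g i u) ^ 2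
      = ∑ j, (‖x j‖ ^ 2 - ∑ i, ⟪x j, g i⟫ ^ 2) := by
  rw [sum_congr rfl fun i _ => sum_comm, sum_comm]
  refine sum_congr rfl fun j _ => ?_
  rw [sum_congr rfl fun i _ => (x j).sum_sq_sub_inner_mul_of_support (hg i) (hg1 i),
    sum_sub_distrib, hS.sum_sum_eq_sum, EuclideanSpace.norm_sq_eq]
  simp

theorem kmeans_cost_bound_general
    {n k : ℕ} (hkn : k < n)
    (w : Fin n → Fin n → ℝ)
    (hsymm : ∀ u v, w u v = w v u)
    (hnonneg : ∀ u v, 0 ≤ w u v)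
    (deg : Fin n → ℝ) (hdeg : ∀ u, deg u = ∑ v, w u v)
    (hdegpos : ∀ u, 0 < deg u)
    -- the normalised Laplacian `N = I - D^{-1/2} A D^{-1/2}`
    (N : Matrix (Fin n) (Fin n) ℝ)
    (hN : ∀ u v, N u v =
      (if u = v then (1 : ℝ) else 0) - w u v / (Real.sqrt (deg u) * Real.sqrt (deg v)))
    -- its eigenvalues `lam 0 ≤ … ≤ lam (n-1)` with orthonormal eigenvectors `f`
    (lam : Fin n → ℝ) (hlam : Monotone lam)
    (f : Fin n → EuclideanSpace ℝ (Fin n))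
    (hf : Orthonormal ℝ f)
    (heig : ∀ i, N.mulVec (f i) = lam i • (f i))
    -- `S` is a partition attaining the `k`-way expansion `ρ(k)`
    (S : Fin k → Finset (Fin n)) (hS : IsPartition S)
    (rho : ℝ)
    (hrho : rho = ⨆ i, gCond w deg (S i))
    (hlampos : 0 < lam ⟨k, hkn⟩)
    -- `Υ(k) = λ_{k+1} / ρ(k)`
    (Upsilon : ℝ) (hU : Upsilon = lam ⟨k, hkn⟩ / rho)
    -- the normalised indicator vectors of the clusters
    (gbar : Fin k → EuclideanSpace ℝ (Fin n))
    (hgbar : ∀ i, gbar i = gbarVec deg (S i))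
    -- the spectral embedding `F(u) = (f_1(u), …, f_k(u))/√deg(u)`
    (F : Fin n → EuclideanSpace ℝ (Fin k))
    (hF : ∀ u j, F u j = f (Fin.castLE hkn.le j) u / Real.sqrt (deg u))
    -- the approximate cluster centres `p^(i)(j) = ⟨f_j, ḡ_i⟩ / √vol(S_i)`
    (p : Fin k → EuclideanSpace ℝ (Fin k))
    (hp : ∀ i j, p i j = ⟪f (Fin.castLE hkn.le j), gbar i⟫ / Real.sqrt (gVol deg (S i))) :
    ∑ i : Fin k, ∑ u ∈ S i, deg u * ‖F u - p i‖ ^ 2 ≤ k / Upsilon := by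
  obtain rfl : N = normLap w deg := Matrix.ext hN
  obtain rfl : gbar = fun i => gbarVec deg (S i) := funext hgbar
  have hdefect (i : Fin k) :
      1 - ∑ j : Fin k, ⟪f (Fin.castLE hkn.le j), gbarVec deg (S i)⟫ ^ 2 ≤ rho / lam ⟨k, hkn⟩ :=
    (one_sub_sum_sq_inner_gbarVec_le hnonneg hsymm hdeg hdegpos hf heig hlam hkn hlampos
      (hS.1 i)).trans (div_le_div_of_nonneg_right (hrho ▸
        le_ciSup (f := fun j => gCond w deg (S j)) (Set.finite_range _).bddAbove i) hlampos.le)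
  calc ∑ i : Fin k, ∑ u ∈ S i, deg u * ‖F u - p i‖ ^ 2
      = ∑ i, ∑ u ∈ S i, ∑ j : Fin k, (f (Fin.castLE hkn.le j) u
          - ⟪f (Fin.castLE hkn.le j), gbarVec deg (S i)⟫ * gbarVec deg (S i) u) ^ 2 :=
        sum_congr rfl fun i _ => sum_congr rfl fun u hu =>
          deg_mul_norm_sub_sq_eq hdegpos hu _ (hF u) (hp i)
    _ = ∑ j : Fin k, (‖f (Fin.castLE hkn.le j)‖ ^ 2
          - ∑ i, ⟪f (Fin.castLE hkn.le j), gbarVec deg (S i)⟫ ^ 2) :=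
        hS.sum_sum_sum_sq_sub_inner_mul (fun _ _ => gbarVec_apply_of_notMem)
          (fun i => norm_gbarVec hdegpos (hS.1 i)) _
    _ = ∑ i : Fin k, (1 - ∑ j : Fin k, ⟪f (Fin.castLE hkn.le j), gbarVec deg (S i)⟫ ^ 2) := by
        simp_rw [hf.1, one_pow, sum_sub_distrib]
        rw [sum_comm]
    _ ≤ ∑ _i : Fin k, rho / lam ⟨k, hkn⟩ := sum_le_sum fun i _ => hdefect i
    _ = k / Upsilon := by
        rw [sum_const, card_univ, Fintype.card_fin, nsmul_eq_mul, hU, div_div_eq_mul_div]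
        ring

/-- The total `k`-means cost of the spectral embedding with respect to the
approximate cluster centres is bounded by `k/Υ(k)` (Lemma 4.4). -/
theorem kmeans_cost_bound
    {n k : ℕ} (hk : 0 < k) (hkn : k < n)
    (w : Fin n → Fin n → ℝ)
    (hsymm : ∀ u v, w u v = w v u)
    (hnonneg : ∀ u v, 0 ≤ w u v)
    (deg : Fin n → ℝ) (hdeg : ∀ u, deg u = ∑ v, w u v)
    (hdegpos : ∀ u, 0 < deg u)
    -- the normalised Laplacian `N = I - D^{-1/2} A D^{-1/2}`
    (N : Matrix (Fin n) (Fin n) ℝ)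
    (hN : ∀ u v, N u v =
      (if u = v then (1 : ℝ) else 0) - w u v / (Real.sqrt (deg u) * Real.sqrt (deg v)))
    -- its eigenvalues `lam 0 ≤ … ≤ lam (n-1)` with orthonormal eigenvectors `f`
    (lam : Fin n → ℝ) (hlam : Monotone lam)
    (f : Fin n → EuclideanSpace ℝ (Fin n))
    (hf : Orthonormal ℝ f)
    (heig : ∀ i, N.mulVec (f i) = lam i • (f i))
    -- `S` is a partition attaining the `k`-way expansion `ρ(k)`
    (S : Fin k → Finset (Fin n)) (hS : IsPartition S)
    (rho : ℝ)
    (hrho : rho = ⨆ i, gCond w deg (S i))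
    (hopt : ∀ T : Fin k → Finset (Fin n), IsPartition T → rho ≤ ⨆ i, gCond w deg (T i))
    (hrhopos : 0 < rho)
    (hlampos : 0 < lam ⟨k, hkn⟩)
    -- `Υ(k) = λ_{k+1} / ρ(k)`
    (Upsilon : ℝ) (hU : Upsilon = lam ⟨k, hkn⟩ / rho)
    -- the normalised indicator vectors of the clusters
    (gbar : Fin k → EuclideanSpace ℝ (Fin n))
    (hgbar : ∀ i, gbar i = gbarVec deg (S i))
    -- the spectral embedding `F(u) = (f_1(u), …, f_k(u))/√deg(u)`
    (F : Fin n → EuclideanSpace ℝ (Fin k))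
    (hF : ∀ u j, F u j = f (Fin.castLE hkn.le j) u / Real.sqrt (deg u))
    -- the approximate cluster centres `p^(i)(j) = ⟨f_j, ḡ_i⟩ / √vol(S_i)`
    (p : Fin k → EuclideanSpace ℝ (Fin k))
    (hp : ∀ i j, p i j = ⟪f (Fin.castLE hkn.le j), gbar i⟫ / Real.sqrt (gVol deg (S i))) :
    ∑ i : Fin k, ∑ u ∈ S i, deg u * ‖F u - p i‖ ^ 2 ≤ k / Upsilon :=
  kmeans_cost_bound_general hkn w hsymm hnonneg deg hdeg hdegpos N hN lam hlam f hf heig S hS rho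
    hrho hlampos Upsilon hU gbar hgbar F hF p hp
end

section
/- From an ε-simple set to a simple set: let S ⊆ V × {1,2} be an ε-simple set with 0 ≤ ε < 1, let P = {u_1, u_2 : u ∈ V, u_1 ∈ S and u_2 ∈ S}, and let S' = S ∖ P. Then Φ(S') ≤ (Φ(S) + ε)/(1 − ε). -/
open Finset

/-- The conductance `Φ(T) = w(T, Tᶜ)/vol(T)` of a vertex set. -/
noncomputable def gCondVol {V : Type*} [Fintype V] [DecidableEq V]
    (w : V → V → ℝ) (deg : V → ℝ) (T : Finset V) : ℝ :=
  gCut w T Tᶜ / gVol deg T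

/-! Removing `P` from `S` loses at most `vol(P) ≤ ε·vol(S)` of volume, and the only new
boundary edges of `S ∖ P` are those into `P`, whose total weight is again at most `vol(P)`
because every vertex of `P` has degree equal to the total weight of its edges. -/

section Conductance

variable {α : Type*} {w : α → α → ℝ} {deg : α → ℝ}

theorem gCut_nonneg (hnonneg : ∀ x y, 0 ≤ w x y) (A B : Finset α) : 0 ≤ gCut w A B :=
  sum_nonneg fun x _ => sum_nonneg fun y _ => hnonneg x y

theorem gCut_mono_left (hnonneg : ∀ x y, 0 ≤ w x y) {A A' : Finset α} (hA : A ⊆ A')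
    (B : Finset α) : gCut w A B ≤ gCut w A' B :=
  sum_le_sum_of_subset_of_nonneg hA fun x _ _ => sum_nonneg fun y _ => hnonneg x y

theorem gCut_union_right [DecidableEq α] {B C : Finset α} (hBC : Disjoint B C) (A : Finset α) :
    gCut w A (B ∪ C) = gCut w A B + gCut w A C := by
  simp only [gCut, ← sum_add_distrib, sum_union hBC]

theorem gCut_le_gVol_right [Fintype α] (hsymm : ∀ x y, w x y = w y x)
    (hnonneg : ∀ x y, 0 ≤ w x y) (hdeg : ∀ x, deg x = ∑ y, w x y) (A B : Finset α) :
    gCut w A B ≤ gVol deg B := by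
  rw [gCut, sum_comm, gVol]
  refine sum_le_sum fun y _ => ?_
  calc ∑ x ∈ A, w x y ≤ ∑ x, w x y := sum_le_univ_sum_of_nonneg fun x => hnonneg x y
    _ = deg y := by simp only [hdeg y, hsymm _ y]

theorem gVol_sdiff [DecidableEq α] {S P : Finset α} (hPS : P ⊆ S) :
    gVol deg (S \ P) = gVol deg S - gVol deg P :=
  sum_sdiff_eq_sub hPS

theorem gCut_sdiff_compl_le [Fintype α] [DecidableEq α] (hsymm : ∀ x y, w x y = w y x)
    (hnonneg : ∀ x y, 0 ≤ w x y) (hdeg : ∀ x, deg x = ∑ y, w x y) {S P : Finset α}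
    (hPS : P ⊆ S) :
    gCut w (S \ P) (S \ P)ᶜ ≤ gCut w S Sᶜ + gVol deg P := by
  have hcompl : (S \ P)ᶜ = Sᶜ ∪ P := by
    ext x
    simp only [mem_compl, mem_sdiff, mem_union]
    tauto
  have hdisj : Disjoint Sᶜ P := disjoint_compl_left.mono_right hPS
  rw [hcompl, gCut_union_right hdisj]
  exact add_le_add (gCut_mono_left hnonneg sdiff_subset _)
    (gCut_le_gVol_right hsymm hnonneg hdeg _ _)

theorem gCondVol_sdiff_le [Fintype α] [DecidableEq α] (hsymm : ∀ x y, w x y = w y x)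
    (hnonneg : ∀ x y, 0 ≤ w x y) (hdeg : ∀ x, deg x = ∑ y, w x y) {S P : Finset α}
    (hPS : P ⊆ S) (hS : 0 < gVol deg S) {eps : ℝ} (heps1 : eps < 1)
    (hsmall : gVol deg P ≤ eps * gVol deg S) :
    gCondVol w deg (S \ P) ≤ (gCondVol w deg S + eps) / (1 - eps) := by
  have hvol : (1 - eps) * gVol deg S ≤ gVol deg (S \ P) := by
    rw [gVol_sdiff hPS]
    linarith
  have hcut : gCut w (S \ P) (S \ P)ᶜ ≤ gCut w S Sᶜ + eps * gVol deg S :=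
    (gCut_sdiff_compl_le hsymm hnonneg hdeg hPS).trans (by linarith)
  have hvolS : 0 < (1 - eps) * gVol deg S := mul_pos (by linarith) hS
  calc gCondVol w deg (S \ P)
      ≤ (gCut w S Sᶜ + eps * gVol deg S) / ((1 - eps) * gVol deg S) :=
        div_le_div₀ ((gCut_nonneg hnonneg _ _).trans hcut) hcut hvolS hvol
    _ = (gCondVol w deg S + eps) / (1 - eps) := by
        rw [gCondVol]
        field_simp

end Conductance

theorem eps_simple_to_simple_general
    {V : Type*} [Fintype V] [DecidableEq V]
    (w : V × Bool → V × Bool → ℝ)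
    (hsymm : ∀ x y, w x y = w y x)
    (hnonneg : ∀ x y, 0 ≤ w x y)
    (deg : V × Bool → ℝ) (hdeg : ∀ x, deg x = ∑ y, w x y)
    (S : Finset (V × Bool)) (hS : 0 < gVol deg S)
    (eps : ℝ) (heps1 : eps < 1)
    -- `P` consists of the pairs `u₁, u₂` that are both contained in `S`
    (P : Finset (V × Bool)) (hP : P = S.filter (fun x => (x.1, !x.2) ∈ S))
    -- `S` is `ε`-simple
    (hsimple : gVol deg P ≤ eps * gVol deg S) :
    gCondVol w deg (S \ P) ≤ (gCondVol w deg S + eps) / (1 - eps) :=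
  gCondVol_sdiff_le hsymm hnonneg hdeg (hP ▸ filter_subset _ S) hS heps1 hsimple

/-- **From an ε-simple set to a simple set** (Lemma 6.15): removing the doubled
vertices of an `ε`-simple set `S` gives a simple set `S' = S ∖ P` with
`Φ(S') ≤ (Φ(S) + ε)/(1 − ε)`. Here `H` is an undirected weighted graph on the vertex
set `V × {1, 2}`, with `(v, false)` playing the role of `v₁` and `(v, true)` of `v₂`. -/
theorem eps_simple_to_simple
    {V : Type*} [Fintype V] [DecidableEq V]
    (w : V × Bool → V × Bool → ℝ)
    (hsymm : ∀ x y, w x y = w y x)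
    (hnonneg : ∀ x y, 0 ≤ w x y)
    (deg : V × Bool → ℝ) (hdeg : ∀ x, deg x = ∑ y, w x y)
    (S : Finset (V × Bool)) (hS : 0 < gVol deg S)
    (eps : ℝ) (heps0 : 0 ≤ eps) (heps1 : eps < 1)
    -- `P` consists of the pairs `u₁, u₂` that are both contained in `S`
    (P : Finset (V × Bool)) (hP : P = S.filter (fun x => (x.1, !x.2) ∈ S))
    -- `S` is `ε`-simple
    (hsimple : gVol deg P ≤ eps * gVol deg S) :
    gCondVol w deg (S \ P) ≤ (gCondVol w deg S + eps) / (1 - eps) :=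
  eps_simple_to_simple_general w hsymm hnonneg deg hdeg S hS eps heps1 P hP hsimple
end

section
/- Clique-reduction inequality for a single hyperedge: let e be a finite set of size r ≥ 2 and f: e → ℝ. Then (max_{u∈e} f(u) + min_{v∈e} f(v))² ≤ (1/(r−1))·Σ_{{u,v}⊆e, u≠v} (f(u) + f(v))², where the sum is over unordered pairs of distinct elements of e. Moreover equality holds if r = 2 or if at most one element u ∈ e has f(u) ≠ 0. -/
open Finset


private lemma pair_image_offDiag {α : Type*} [Fintype α] [DecidableEq α] :
    (univ.offDiag (α := α)).image (fun p : α × α => ({p.1, p.2} : Finset α)) =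
      univ.powersetCard 2 := by
  ext s
  simp only [mem_image, mem_offDiag, mem_univ, true_and, mem_powersetCard, subset_univ,
    Finset.card_eq_two]
  constructor
  · rintro ⟨⟨a, b⟩, hab, rfl⟩; exact ⟨a, b, hab, rfl⟩
  · rintro ⟨a, b, hab, rfl⟩; exact ⟨(a, b), hab, rfl⟩

private lemma pair_eq_pair_aux {α : Type*} [DecidableEq α] {a b x y : α} (hxy : x ≠ y)
    (h : ({x, y} : Finset α) = {a, b}) : (x = a ∧ y = b) ∨ (x = b ∧ y = a) := by
  have hx : x ∈ ({a, b} : Finset α) := h ▸ (by simp)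
  have hy : y ∈ ({a, b} : Finset α) := h ▸ (by simp)
  simp only [mem_insert, mem_singleton] at hx hy
  rcases hx with rfl | rfl <;> rcases hy with rfl | rfl <;> tauto

private lemma key_identity {α : Type*} [Fintype α] [DecidableEq α] (f : α → ℝ) :
    ∑ s ∈ Finset.univ.powersetCard 2, (∑ x ∈ s, f x) ^ 2 =
      ((Fintype.card α : ℝ) - 2) * ∑ x, f x ^ 2 + (∑ x, f x) ^ 2 := by
  classical
  have h2 : ∑ p ∈ univ.offDiag (α := α), (f p.1 + f p.2) ^ 2 =
      2 * ∑ s ∈ Finset.univ.powersetCard 2, (∑ x ∈ s, f x) ^ 2 := by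
    have hcomp := Finset.sum_comp (s := univ.offDiag (α := α))
      (f := fun s : Finset α => (∑ x ∈ s, f x) ^ 2)
      (g := fun p : α × α => ({p.1, p.2} : Finset α))
    rw [pair_image_offDiag] at hcomp
    have hl : ∑ p ∈ univ.offDiag (α := α), (f p.1 + f p.2) ^ 2 =
        ∑ p ∈ univ.offDiag (α := α), (∑ x ∈ ({p.1, p.2} : Finset α), f x) ^ 2 := by
      refine Finset.sum_congr rfl fun p hp => ?_
      rw [Finset.sum_pair (Finset.mem_offDiag.1 hp).2.2]
    rw [hl, hcomp]
    rw [Finset.mul_sum]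
    refine Finset.sum_congr rfl fun s hs => ?_
    rw [Finset.mem_powersetCard] at hs
    obtain ⟨a, b, hab, rfl⟩ := Finset.card_eq_two.1 hs.2
    have hfib : ({p ∈ univ.offDiag (α := α) | ({p.1, p.2} : Finset α) = {a, b}}) =
        ({(a, b), (b, a)} : Finset (α × α)) := by
      ext ⟨x, y⟩
      simp only [Finset.mem_filter, mem_offDiag, mem_univ, true_and, mem_insert, mem_singleton,
        Prod.mk.injEq]
      constructor
      · rintro ⟨hxy, h⟩
        rcases pair_eq_pair_aux hxy h with ⟨rfl, rfl⟩ | ⟨rfl, rfl⟩ <;> tauto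
      · rintro (⟨rfl, rfl⟩ | ⟨rfl, rfl⟩)
        · exact ⟨hab, rfl⟩
        · exact ⟨hab.symm, by rw [Finset.pair_comm]⟩
    rw [hfib]
    have : ({(a, b), (b, a)} : Finset (α × α)).card = 2 := by
      rw [Finset.card_insert_of_notMem (by simp [hab]), Finset.card_singleton]
    rw [this, nsmul_eq_mul]
    norm_num
  have h3 : ∑ p ∈ (univ ×ˢ univ : Finset (α × α)), (f p.1 + f p.2) ^ 2 =
      ∑ p ∈ univ.diag (α := α), (f p.1 + f p.2) ^ 2 +
        ∑ p ∈ univ.offDiag (α := α), (f p.1 + f p.2) ^ 2 := by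
    rw [← Finset.diag_union_offDiag, Finset.sum_union (Finset.disjoint_diag_offDiag _)]
  have h4 : ∑ p ∈ univ.diag (α := α), (f p.1 + f p.2) ^ 2 = ∑ x, (2 * f x) ^ 2 := by
    rw [Finset.sum_diag]
    exact Finset.sum_congr rfl fun x _ => by ring
  have h5 : ∑ p ∈ (univ ×ˢ univ : Finset (α × α)), (f p.1 + f p.2) ^ 2 =
      2 * (Fintype.card α : ℝ) * ∑ x, f x ^ 2 + 2 * (∑ x, f x) ^ 2 := by
    rw [Finset.sum_product]
    have : ∀ x : α, ∑ y, (f x + f y) ^ 2 =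
        (Fintype.card α : ℝ) * f x ^ 2 + 2 * f x * (∑ y, f y) + ∑ y, f y ^ 2 := by
      intro x
      rw [Finset.sum_congr rfl (fun y _ => by ring :
        ∀ y ∈ univ, (f x + f y) ^ 2 = f x ^ 2 + 2 * f x * f y + f y ^ 2)]
      rw [Finset.sum_add_distrib, Finset.sum_add_distrib, Finset.sum_const, ← Finset.mul_sum]
      simp [Finset.card_univ, nsmul_eq_mul]
    rw [Finset.sum_congr rfl fun x _ => this x, Finset.sum_add_distrib, Finset.sum_add_distrib,
      ← Finset.mul_sum, Finset.sum_const, Finset.card_univ, nsmul_eq_mul]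
    have e : ∑ x, 2 * f x * (∑ y, f y) = 2 * (∑ x, f x) * (∑ y, f y) := by
      rw [← Finset.sum_mul, ← Finset.mul_sum]
    rw [e]; ring
  have h6 : ∑ x, (2 * f x) ^ 2 = 4 * ∑ x, f x ^ 2 := by
    rw [Finset.mul_sum]; exact Finset.sum_congr rfl fun x _ => by ring
  have := h3
  rw [h4, h6, h2, h5] at this
  linarith

/-- **Clique-reduction inequality for a single hyperedge** (Lemma 7.6): for a finite set `e`
of size `r ≥ 2` (formalised as a finite type `α`) and `f : α → ℝ`,
`(max f + min f)² ≤ (1/(r−1))·Σ_{{u,v}⊆e, u≠v} (f(u) + f(v))²`, where the sum ranges over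
the unordered pairs of distinct elements (the two-element subsets) of `e`. Moreover,
equality holds if `r = 2` or if at most one element of `e` has a non-zero `f`-value. -/
theorem clique_reduction_single_hyperedge
    {α : Type*} [Fintype α] [DecidableEq α] [Nonempty α]
    (hcard : 2 ≤ Fintype.card α) (f : α → ℝ) :
    (Finset.univ.sup' Finset.univ_nonempty f +
          Finset.univ.inf' Finset.univ_nonempty f) ^ 2 ≤
      (1 / ((Fintype.card α : ℝ) - 1)) *
        ∑ s ∈ Finset.univ.powersetCard 2, (∑ x ∈ s, f x) ^ 2 ∧
    ((Fintype.card α = 2 ∨ ∀ u v, f u ≠ 0 → f v ≠ 0 → u = v) →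
      (Finset.univ.sup' Finset.univ_nonempty f +
            Finset.univ.inf' Finset.univ_nonempty f) ^ 2 =
        (1 / ((Fintype.card α : ℝ) - 1)) *
          ∑ s ∈ Finset.univ.powersetCard 2, (∑ x ∈ s, f x) ^ 2) := by
  classical
  set r : ℝ := (Fintype.card α : ℝ) with hr
  have hr2 : (2 : ℝ) ≤ r := by rw [hr]; exact_mod_cast hcard
  have hr1 : (0 : ℝ) < r - 1 := by linarith
  set M : ℝ := Finset.univ.sup' Finset.univ_nonempty f with hM
  set m : ℝ := Finset.univ.inf' Finset.univ_nonempty f with hm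
  set Q : ℝ := ∑ x, f x ^ 2 with hQ
  set S : ℝ := ∑ x, f x with hS
  have key := key_identity f
  rw [← hr, ← hQ, ← hS] at key
  have hle : ∀ x : α, f x ≤ M := fun x => Finset.le_sup' f (Finset.mem_univ x)
  have hge : ∀ x : α, m ≤ f x := fun x => Finset.inf'_le f (Finset.mem_univ x)
  obtain ⟨a, -, ha⟩ := Finset.exists_mem_eq_sup' Finset.univ_nonempty f
  obtain ⟨b, -, hb⟩ := Finset.exists_mem_eq_inf' Finset.univ_nonempty f
  rw [← hM] at ha
  rw [← hm] at hb
  -- main inequality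
  have hmain : (r - 1) * (M + m) ^ 2 ≤ (r - 2) * Q + S ^ 2 := by
    by_cases hMm : M = m
    · -- f is constant
      have hconst : ∀ x : α, f x = M := fun x => le_antisymm (hle x) (hMm ▸ hge x)
      have hQc : Q = r * M ^ 2 := by
        rw [hQ, Finset.sum_congr rfl fun x _ => by rw [hconst x], Finset.sum_const,
          Finset.card_univ, nsmul_eq_mul, hr]
      have hSc : S = r * M := by
        rw [hS, Finset.sum_congr rfl fun x _ => by rw [hconst x], Finset.sum_const,
          Finset.card_univ, nsmul_eq_mul, hr]
      rw [hQc, hSc, ← hMm]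
      nlinarith [mul_nonneg (mul_nonneg (by linarith : (0:ℝ) ≤ r - 1) (by linarith : (0:ℝ) ≤ r - 2)) (sq_nonneg M)]
    · have hab : a ≠ b := by
        rintro rfl; exact hMm (ha.trans hb.symm)
      set R : Finset α := univ \ {a, b} with hR
      have hcardR : (R.card : ℝ) = r - 2 := by
        rw [hR, Finset.card_sdiff_of_subset (Finset.subset_univ _), Finset.card_univ]
        have : ({a, b} : Finset α).card = 2 := by
          rw [Finset.card_insert_of_notMem (by simp [hab]), Finset.card_singleton]
        rw [this]
        push_cast [Nat.cast_sub hcard]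
        ring
      set QR : ℝ := ∑ x ∈ R, f x ^ 2 with hQR
      set SR : ℝ := ∑ x ∈ R, f x with hSR
      have hsplit : ∀ g : α → ℝ, ∑ x, g x = g a + g b + ∑ x ∈ R, g x := by
        intro g
        rw [hR, ← Finset.sum_sdiff (Finset.subset_univ ({a, b} : Finset α)),
          Finset.sum_pair hab]
        ring
      have hQs : Q = M ^ 2 + m ^ 2 + QR := by
        rw [hQ, hsplit (fun x => f x ^ 2), ha, hb]
      have hSs : S = M + m + SR := by
        rw [hS, hsplit f, ha, hb]
      -- pointwise bound
      have hpt : ∀ x ∈ R, f x ^ 2 ≤ (M + m) * f x - M * m := by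
        intro x _
        nlinarith [mul_nonneg (sub_nonneg.2 (hge x)) (sub_nonneg.2 (hle x))]
      have hsum : QR ≤ (M + m) * SR - (r - 2) * (M * m) := by
        have := Finset.sum_le_sum hpt
        rw [← hQR] at this
        have h2 : ∑ x ∈ R, ((M + m) * f x - M * m) =
            (M + m) * SR - (R.card : ℝ) * (M * m) := by
          rw [Finset.sum_sub_distrib, ← Finset.mul_sum, Finset.sum_const, nsmul_eq_mul, hSR]
        rw [h2, hcardR] at this
        exact this
      have hQRpos : 0 ≤ QR := Finset.sum_nonneg fun x _ => sq_nonneg (f x)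
      rw [hQs, hSs]
      nlinarith [hsum, sq_nonneg SR, mul_nonneg (by linarith : (0:ℝ) ≤ r - 2) hQRpos, hQRpos]
  have hineq : (M + m) ^ 2 ≤ (1 / (r - 1)) * ((r - 2) * Q + S ^ 2) := by
    rw [one_div, inv_mul_eq_div, le_div_iff₀ hr1]
    nlinarith [hmain]
  refine ⟨by rw [key]; exact hineq, ?_⟩
  rintro (h2 | h1)
  · -- card = 2
    have hr2' : r = 2 := by rw [hr, h2]; norm_num
    have hMmS : M + m = S := by
      by_cases hMm : M = m
      · have hconst : ∀ x : α, f x = M := fun x => le_antisymm (hle x) (hMm ▸ hge x)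
        have : S = r * M := by
          rw [hS, Finset.sum_congr rfl fun x _ => by rw [hconst x], Finset.sum_const,
            Finset.card_univ, nsmul_eq_mul, hr]
        rw [this, hr2', ← hMm]; ring
      · have hab : a ≠ b := by rintro rfl; exact hMm (ha.trans hb.symm)
        have huniv : (univ : Finset α) = {a, b} := by
          refine (Finset.eq_of_subset_of_card_le (Finset.subset_univ _) ?_).symm
          rw [Finset.card_univ, h2,
            Finset.card_insert_of_notMem (by simp [hab]), Finset.card_singleton]
        rw [hS, huniv, Finset.sum_pair hab, ha, hb]
    rw [key, hr2', hMmS]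
    norm_num
  · -- at most one nonzero value
    by_cases hzero : ∀ x : α, f x = 0
    · have hM0 : M = 0 := by rw [ha, hzero a]
      have hm0 : m = 0 := by rw [hb, hzero b]
      have hQ0 : Q = 0 := by rw [hQ]; exact Finset.sum_eq_zero fun x _ => by rw [hzero x]; ring
      have hS0 : S = 0 := by rw [hS]; exact Finset.sum_eq_zero fun x _ => hzero x
      rw [key, hM0, hm0, hQ0, hS0]; ring
    · push_neg at hzero
      obtain ⟨u, hu⟩ := hzero
      have hrest : ∀ v, v ≠ u → f v = 0 := by
        intro v hv
        by_contra hfv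
        exact hv (h1 v u hfv hu)
      obtain ⟨w, hw⟩ := Fintype.exists_ne_of_one_lt_card (by omega) u
      have hfw : f w = 0 := hrest w hw
      have hQu : Q = f u ^ 2 := by
        rw [hQ]
        rw [Finset.sum_eq_single u (fun v _ hv => by rw [hrest v hv]; ring)
          (fun h => absurd (Finset.mem_univ u) h)]
      have hSu : S = f u := by
        rw [hS]
        rw [Finset.sum_eq_single u (fun v _ hv => hrest v hv)
          (fun h => absurd (Finset.mem_univ u) h)]
      have hMufu : f u ≤ M := hle u
      have hmufu : m ≤ f u := hge u
      have hMw : 0 ≤ M := by rw [← hfw]; exact hle w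
      have hmw : m ≤ 0 := by rw [← hfw]; exact hge w
      have hMm : M + m = f u := by
        rcases lt_trichotomy (f u) 0 with hneg | h0 | hpos
        · have hM0 : M = 0 := by
            rcases eq_or_ne a u with rfl | hau
            · linarith [ha]
            · rw [ha, hrest a hau]
          have hmu : m = f u := by
            rcases eq_or_ne b u with rfl | hbu
            · exact hb
            · exfalso; rw [hb, hrest b hbu] at hmufu; linarith
          rw [hM0, hmu]; ring
        · exact absurd h0 hu
        · have hMu : M = f u := by
            rcases eq_or_ne a u with rfl | hau
            · exact ha
            · exfalso; rw [ha, hrest a hau] at hMufu; linarith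
          have hm0 : m = 0 := by
            rcases eq_or_ne b u with rfl | hbu
            · linarith [hb]
            · rw [hb, hrest b hbu]
          rw [hMu, hm0]; ring
      have hne : r - 1 ≠ 0 := ne_of_gt hr1
      rw [key, hMm, hQu, hSu]
      field_simp
      ring
end
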